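/- Assume additionally that A·M ⊇ M·A for every A ∈ Δ. For A, B ∈ Δ, the map Γ C Γ ↦ Γ̃ (C,0) Γ̃ induces a bijection from Γ\ΓAΓBΓ/Γ onto Γ̃\Γ̃(A,0)Γ̃(B,0)Γ̃/Γ̃, with inverse induced by the projection (C,c) ↦ C. -/

import Mathlib

/-!
Write `C·m = l C m` and `m·C = r C m`. The set `Γ̃ = Γ × M` is a group under the twisted
product, so a double coset `Γ̃xΓ̃` is determined by any of its members; in particular
`Γ̃(C, C·b)Γ̃ = Γ̃(C,0)Γ̃`, as `(C, C·b) = (C,0)(1,b)`. For `h ∈ Γ̃` the second coordinate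
of `(A,0)h(B,0)` is `A·h₂·B = A·(h₂·h₁⁻¹)·(h₁B)`, and since `h₁B ∈ Δ` the hypothesis
`M(h₁B) ⊆ (h₁B)M` puts it in `(Ah₁B)·M`. Hence every double coset in `Γ̃(A,0)Γ̃(B,0)Γ̃` has
the form `Γ̃(C,0)Γ̃`, and two of these coincide as soon as their projections `ΓCΓ` do.
-/

def tmul {G M : Type*} [Group G] [AddCommGroup M] (l r : G → M →+ M)
    (x y : G × M) : G × M :=
  (x.1 * y.1, l x.1 y.2 + r y.1 x.2)

def tdcoset {G M : Type*} [Group G] [AddCommGroup M] (l r : G → M →+ M)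
    (Γ : Set G) (x : G × M) : Set (G × M) :=
  {z | ∃ g h : G × M, g.1 ∈ Γ ∧ h.1 ∈ Γ ∧ z = tmul l r (tmul l r g x) h}

def dcosetG {G : Type*} [Group G] (Γ : Set G) (x : G) : Set G :=
  {z | ∃ g ∈ Γ, ∃ h ∈ Γ, z = g * x * h}

lemma mem_dcosetG_self {G : Type*} [Group G] (Γ : Subgroup G) (x : G) :
    x ∈ dcosetG (Γ : Set G) x :=
  ⟨1, Γ.one_mem, 1, Γ.one_mem, by simp⟩

section TwistedProduct

variable {G M : Type*} [Group G] [AddCommGroup M] {l r : G → M →+ M}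

lemma fst_image_tdcoset (Γ : Set G) (x : G × M) :
    Prod.fst '' tdcoset l r Γ x = dcosetG Γ x.1 := by
  ext z
  constructor
  · rintro ⟨_, ⟨g, h, hg, hh, rfl⟩, rfl⟩
    exact ⟨g.1, hg, h.1, hh, rfl⟩
  · rintro ⟨g, hg, h, hh, rfl⟩
    exact ⟨_, ⟨(g, 0), (h, 0), hg, hh, rfl⟩, rfl⟩

def tinv (l r : G → M →+ M) (x : G × M) : G × M :=
  (x.1⁻¹, -l x.1⁻¹ (r x.1⁻¹ x.2))

variable (hl1 : l 1 = AddMonoidHom.id M) (hlm : ∀ g h : G, l (g * h) = (l g).comp (l h))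
  (hr1 : r 1 = AddMonoidHom.id M) (hrm : ∀ g h : G, r (g * h) = (r h).comp (r g))
  (hcomm : ∀ (g h : G) (m : M), l g (r h m) = r h (l g m))

include hlm hrm hcomm in
lemma tmul_assoc (x y z : G × M) :
    tmul l r (tmul l r x y) z = tmul l r x (tmul l r y z) := by
  refine Prod.ext (mul_assoc _ _ _) ?_
  simp only [tmul, hlm, hrm, AddMonoidHom.comp_apply, map_add, hcomm]
  abel

include hl1 in
lemma one_zero_tmul (x : G × M) : tmul l r (1, 0) x = x := by
  simp [tmul, hl1]

include hr1 in
lemma tmul_one_zero (x : G × M) : tmul l r x (1, 0) = x := by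
  simp [tmul, hr1]

include hr1 hrm hcomm in
lemma tinv_tmul_self (x : G × M) : tmul l r (tinv l r x) x = (1, 0) := by
  have hr : r x.1 (r x.1⁻¹ x.2) = x.2 := by
    rw [← AddMonoidHom.comp_apply, ← hrm, inv_mul_cancel, hr1, AddMonoidHom.id_apply]
  simp [tmul, tinv, ← hcomm, hr]

include hl1 hlm in
lemma tmul_tinv_self (x : G × M) : tmul l r x (tinv l r x) = (1, 0) := by
  have hl : l x.1 (l x.1⁻¹ (r x.1⁻¹ x.2)) = r x.1⁻¹ x.2 := by
    rw [← AddMonoidHom.comp_apply, ← hlm, mul_inv_cancel, hl1, AddMonoidHom.id_apply]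
  simp [tmul, tinv, hl]

include hlm hrm hcomm in
lemma tdcoset_subset_of_mem (Γ : Subgroup G) {x y : G × M}
    (hx : x ∈ tdcoset l r (Γ : Set G) y) :
    tdcoset l r (Γ : Set G) x ⊆ tdcoset l r (Γ : Set G) y := by
  obtain ⟨u, v, hu, hv, rfl⟩ := hx
  rintro _ ⟨g, h, hg, hh, rfl⟩
  refine ⟨tmul l r g u, tmul l r v h, mul_mem hg hu, mul_mem hv hh, ?_⟩
  simp only [tmul_assoc hlm hrm hcomm]

include hl1 hlm hr1 hrm hcomm in
lemma tdcoset_tmul_tmul (Γ : Subgroup G) {u v : G × M} (hu : u.1 ∈ Γ) (hv : v.1 ∈ Γ)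
    (y : G × M) :
    tdcoset l r (Γ : Set G) (tmul l r (tmul l r u y) v) = tdcoset l r (Γ : Set G) y := by
  refine (tdcoset_subset_of_mem hlm hrm hcomm Γ ⟨u, v, hu, hv, rfl⟩).antisymm
    (tdcoset_subset_of_mem hlm hrm hcomm Γ
      ⟨tinv l r u, tinv l r v, inv_mem hu, inv_mem hv, ?_⟩)
  calc y = tmul l r (tmul l r (tmul l r (tinv l r u) u) y) (tmul l r v (tinv l r v)) := by
        rw [tinv_tmul_self hr1 hrm hcomm, tmul_tinv_self hl1 hlm, one_zero_tmul hl1,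
          tmul_one_zero hr1]
    _ = _ := by simp only [tmul_assoc hlm hrm hcomm]

include hl1 hlm hr1 hrm hcomm in
lemma tdcoset_mk_zero_eq_of_mem_dcosetG (Γ : Subgroup G) {x y : G}
    (hxy : x ∈ dcosetG (Γ : Set G) y) :
    tdcoset l r (Γ : Set G) (x, 0) = tdcoset l r (Γ : Set G) (y, 0) := by
  obtain ⟨g, hg, h, hh, rfl⟩ := hxy
  have hprod : ((g * y * h, 0) : G × M) = tmul l r (tmul l r (g, 0) (y, 0)) (h, 0) := by
    simp [tmul]
  rw [hprod, tdcoset_tmul_tmul hl1 hlm hr1 hrm hcomm Γ hg hh]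

include hl1 hlm hr1 hrm hcomm in
lemma tdcoset_mk_l_apply (Γ : Subgroup G) (C : G) (b : M) :
    tdcoset l r (Γ : Set G) (C, l C b) = tdcoset l r (Γ : Set G) (C, 0) := by
  have hprod : ((C, l C b) : G × M) = tmul l r (tmul l r (1, 0) (C, 0)) (1, b) := by
    simp [tmul, hl1, hr1]
  rw [hprod, tdcoset_tmul_tmul hl1 hlm hr1 hrm hcomm Γ Γ.one_mem Γ.one_mem]

include hl1 hlm hr1 hrm hcomm in
lemma tdcoset_mk_zero_tmul_mk_zero (Γ : Subgroup G) (A B : G) (h : G × M)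
    (hD : ∀ m : M, ∃ m' : M, r (h.1 * B) m = l (h.1 * B) m') :
    tdcoset l r (Γ : Set G) (tmul l r (tmul l r (A, 0) h) (B, 0)) =
      tdcoset l r (Γ : Set G) (A * h.1 * B, 0) := by
  obtain ⟨m', hm'⟩ := hD (r h.1⁻¹ h.2)
  have hsnd : r B (l A h.2) = l (A * h.1 * B) m' := by
    rw [mul_assoc, hlm, AddMonoidHom.comp_apply, ← hm', hrm, AddMonoidHom.comp_apply,
      ← AddMonoidHom.comp_apply (r h.1), ← hrm, inv_mul_cancel, hr1, AddMonoidHom.id_apply,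
      hcomm]
  have hprod : tmul l r (tmul l r (A, 0) h) (B, 0) = (A * h.1 * B, l (A * h.1 * B) m') := by
    simp [tmul, hsnd]
  rw [hprod, tdcoset_mk_l_apply hl1 hlm hr1 hrm hcomm]

include hl1 hlm hr1 hrm hcomm in
lemma tdcoset_fst_zero_eq (Γ : Subgroup G) (A B : G) {g h k : G × M}
    (hg : g.1 ∈ Γ) (hk : k.1 ∈ Γ)
    (hD : ∀ m : M, ∃ m' : M, r (h.1 * B) m = l (h.1 * B) m') :
    let x := tmul l r (tmul l r (tmul l r (tmul l r g (A, 0)) h) (B, 0)) k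
    tdcoset l r (Γ : Set G) (x.1, 0) = tdcoset l r (Γ : Set G) x := by
  intro x
  have hx : x = tmul l r (tmul l r g (tmul l r (tmul l r (A, 0) h) (B, 0))) k := by
    simp only [x, tmul_assoc hlm hrm hcomm]
  rw [hx, tdcoset_tmul_tmul hl1 hlm hr1 hrm hcomm Γ hg hk,
    tdcoset_mk_zero_tmul_mk_zero hl1 hlm hr1 hrm hcomm Γ A B h hD]
  exact tdcoset_mk_zero_eq_of_mem_dcosetG hl1 hlm hr1 hrm hcomm Γ ⟨g.1, hg, k.1, hk, rfl⟩

end TwistedProduct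

theorem dcoset_product_bijection_general {G M : Type*} [Group G] [AddCommGroup M]
    (l r : G → M →+ M)
    (hl1 : l 1 = AddMonoidHom.id M)
    (hlm : ∀ g h : G, l (g * h) = (l g).comp (l h))
    (hr1 : r 1 = AddMonoidHom.id M)
    (hrm : ∀ g h : G, r (g * h) = (r h).comp (r g))
    (hcomm : ∀ (g h : G) (m : M), l g (r h m) = r h (l g m))
    (Γ : Subgroup G) (Δ : Submonoid G) (hΓΔ : (Γ : Set G) ⊆ (Δ : Set G))
    -- `AM ⊇ MA` for every `A ∈ Δ`:
    (hAMMA : ∀ C ∈ Δ, ∀ m : M, ∃ m' : M, r C m = l C m')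
    (A B : G) (hB : B ∈ Δ) :
    -- `ΓAΓBΓ` and `Γ̃(A,0)Γ̃(B,0)Γ̃`
    let P : Set G := {z | ∃ g ∈ (Γ : Set G), ∃ h ∈ (Γ : Set G), ∃ k ∈ (Γ : Set G),
      z = g * A * h * B * k}
    let Pt : Set (G × M) := {z | ∃ g h k : G × M, g.1 ∈ (Γ : Set G) ∧
      h.1 ∈ (Γ : Set G) ∧ k.1 ∈ (Γ : Set G) ∧
      z = tmul l r (tmul l r (tmul l r (tmul l r g (A, (0 : M))) h) (B, (0 : M))) k}
    -- the sets of double cosets `Γ\ΓAΓBΓ/Γ` and `Γ̃\Γ̃(A,0)Γ̃(B,0)Γ̃/Γ̃`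
    let X : Set (Set G) := {S | ∃ C ∈ P, S = dcosetG (Γ : Set G) C}
    let Xt : Set (Set (G × M)) := {S | ∃ x ∈ Pt, S = tdcoset l r (Γ : Set G) x}
    -- the projection induces a bijection, inverse to `ΓCΓ ↦ Γ̃(C,0)Γ̃`:
    Set.BijOn (fun S : Set (G × M) => Prod.fst '' S) Xt X ∧
    (∀ C ∈ P, Prod.fst '' (tdcoset l r (Γ : Set G) (C, (0 : M))) = dcosetG (Γ : Set G) C) ∧
    (∀ x ∈ Pt, tdcoset l r (Γ : Set G) (x.1, (0 : M)) = tdcoset l r (Γ : Set G) x) := by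
  intro P Pt X Xt
  have hfix : ∀ x ∈ Pt, tdcoset l r (Γ : Set G) (x.1, 0) = tdcoset l r (Γ : Set G) x := by
    rintro x ⟨g, h, k, hg, hh, hk, rfl⟩
    exact tdcoset_fst_zero_eq hl1 hlm hr1 hrm hcomm Γ A B hg hk
      (hAMMA _ (mul_mem (hΓΔ hh) hB))
  refine ⟨⟨?_, ?_, ?_⟩, fun C _ => fst_image_tdcoset _ (C, 0), hfix⟩
  · rintro _ ⟨x, ⟨g, h, k, hg, hh, hk, rfl⟩, rfl⟩
    exact ⟨_, ⟨g.1, hg, h.1, hh, k.1, hk, rfl⟩, fst_image_tdcoset _ _⟩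
  · rintro _ ⟨x, hx, rfl⟩ _ ⟨y, hy, rfl⟩ hxy
    simp only [fst_image_tdcoset] at hxy
    rw [← hfix x hx, ← hfix y hy]
    exact tdcoset_mk_zero_eq_of_mem_dcosetG hl1 hlm hr1 hrm hcomm Γ
      (hxy ▸ mem_dcosetG_self Γ x.1)
  · rintro _ ⟨_, ⟨g, hg, h, hh, k, hk, rfl⟩, rfl⟩
    exact ⟨_, ⟨(_, 0), ⟨(g, 0), (h, 0), (k, 0), hg, hh, hk, by simp [tmul]⟩, rfl⟩,
      fst_image_tdcoset _ _⟩

theorem dcoset_product_bijection {G M : Type*} [Group G] [AddCommGroup M]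
    (l r : G → M →+ M)
    (hl1 : l 1 = AddMonoidHom.id M)
    (hlm : ∀ g h : G, l (g * h) = (l g).comp (l h))
    (hr1 : r 1 = AddMonoidHom.id M)
    (hrm : ∀ g h : G, r (g * h) = (r h).comp (r g))
    (hcomm : ∀ (g h : G) (m : M), l g (r h m) = r h (l g m))
    (Γ : Subgroup G) (Δ : Submonoid G) (hΓΔ : (Γ : Set G) ⊆ (Δ : Set G))
    -- `AM ⊇ MA` for every `A ∈ Δ`:
    (hAMMA : ∀ C ∈ Δ, ∀ m : M, ∃ m' : M, r C m = l C m')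
    (A B : G) (hA : A ∈ Δ) (hB : B ∈ Δ) :
    -- `ΓAΓBΓ` and `Γ̃(A,0)Γ̃(B,0)Γ̃`
    let P : Set G := {z | ∃ g ∈ (Γ : Set G), ∃ h ∈ (Γ : Set G), ∃ k ∈ (Γ : Set G),
      z = g * A * h * B * k}
    let Pt : Set (G × M) := {z | ∃ g h k : G × M, g.1 ∈ (Γ : Set G) ∧
      h.1 ∈ (Γ : Set G) ∧ k.1 ∈ (Γ : Set G) ∧
      z = tmul l r (tmul l r (tmul l r (tmul l r g (A, (0 : M))) h) (B, (0 : M))) k}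
    -- the sets of double cosets `Γ\ΓAΓBΓ/Γ` and `Γ̃\Γ̃(A,0)Γ̃(B,0)Γ̃/Γ̃`
    let X : Set (Set G) := {S | ∃ C ∈ P, S = dcosetG (Γ : Set G) C}
    let Xt : Set (Set (G × M)) := {S | ∃ x ∈ Pt, S = tdcoset l r (Γ : Set G) x}
    -- the projection induces a bijection, inverse to `ΓCΓ ↦ Γ̃(C,0)Γ̃`:
    Set.BijOn (fun S : Set (G × M) => Prod.fst '' S) Xt X ∧
    (∀ C ∈ P, Prod.fst '' (tdcoset l r (Γ : Set G) (C, (0 : M))) = dcosetG (Γ : Set G) C) ∧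
    (∀ x ∈ Pt, tdcoset l r (Γ : Set G) (x.1, (0 : M)) = tdcoset l r (Γ : Set G) x) :=
  dcoset_product_bijection_general l r hl1 hlm hr1 hrm hcomm Γ Δ hΓΔ hAMMA A B hB
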